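/- arXiv:2601.21467 — 4 statements merged into one kernel-verified Lean document; each statement's English description precedes it below -/
import Mathlib

section
/- Suppose f: H₁ × ⋯ × H_L → ℝ satisfies the blockwise Lipschitz condition: there exist β_{ℓ,j} > 0 such that for all x, all j, and all v_j ∈ H_j, ‖∇_ℓ f(x + e_j v_j) − ∇_ℓ f(x)‖ ≤ β_{ℓ,j}‖v_j‖, where e_j v_j denotes the vector with v_j in block j and zeros elsewhere. Then for every ε = (ε_ℓ) ∈ {0,1}^L, setting β = sqrt(Σ_{ℓ,j} ε_j β_{ℓ,j}²), one has for all x and all v = (v_ℓ): ‖∇f(x + (ε_ℓ v_ℓ)_ℓ) − ∇f(x)‖ ≤ β·‖(ε_ℓ v_ℓ)_ℓ‖. -/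
/-!
Walking from `x` to `x + w` one block at a time, the triangle inequality and the blockwise
Lipschitz bounds give `‖∇_ℓ f(x + w) - ∇_ℓ f(x)‖ ≤ ∑_j β_{ℓ,j} ‖w_j‖` for each block `ℓ`.
For `w = (ε_j v_j)_j` only the blocks with `ε_j = 1` contribute, so Cauchy–Schwarz bounds this
by `√(∑_j ε_j β_{ℓ,j}²) ‖w‖`; summing the squares over `ℓ` gives the claim.
-/

open Finset

theorem norm_map_add_sum_sub_le_sum {E F ι : Type*} [AddCommGroup E] [SeminormedAddCommGroup F]
    (g : E → F) (e : ι → E) (c : ι → ℝ) (h : ∀ j y, ‖g (y + e j) - g y‖ ≤ c j)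
    (s : Finset ι) (y : E) : ‖g (y + ∑ j ∈ s, e j) - g y‖ ≤ ∑ j ∈ s, c j := by
  classical
  induction s using Finset.induction_on with
  | empty => simp
  | insert a s ha ih =>
    rw [sum_insert ha, sum_insert ha, add_left_comm, add_comm (e a)]
    calc ‖g (y + ∑ j ∈ s, e j + e a) - g y‖
        ≤ ‖g (y + ∑ j ∈ s, e j + e a) - g (y + ∑ j ∈ s, e j)‖
          + ‖g (y + ∑ j ∈ s, e j) - g y‖ := norm_sub_le_norm_sub_add_norm_sub _ _ _
      _ ≤ c a + ∑ j ∈ s, c j := add_le_add (h a _) ih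

namespace PiLp

variable {ι : Type*} [Fintype ι] {β : ι → Type*} [∀ i, SeminormedAddCommGroup (β i)]

theorem univ_sum_single [DecidableEq ι] (p : ENNReal) (w : PiLp p β) :
    ∑ j, single p j (w j) = w := by
  simp_rw [← toLp_single, ← WithLp.toLp_sum, Finset.univ_sum_single]

theorem sum_mul_norm_apply_le (b : ι → ℝ) (w : PiLp 2 β) :
    ∑ j, b j * ‖w j‖ ≤ √(∑ j, b j ^ 2) * ‖w‖ := by
  rw [norm_eq_of_L2]
  exact Real.sum_mul_le_sqrt_mul_sqrt _ _ _

theorem norm_le_sqrt_sum_mul_of_norm_apply_le {c : ι → ℝ} {r : ℝ} (hc : ∀ i, 0 ≤ c i)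
    (hr : 0 ≤ r) (x : PiLp 2 β) (h : ∀ i, ‖x i‖ ≤ √(c i) * r) : ‖x‖ ≤ √(∑ i, c i) * r := by
  have hsq : ∀ i, ‖x i‖ ^ 2 ≤ c i * r ^ 2 := fun i => by
    calc ‖x i‖ ^ 2 ≤ (√(c i) * r) ^ 2 := pow_le_pow_left₀ (norm_nonneg _) (h i) 2
      _ = c i * r ^ 2 := by rw [mul_pow, Real.sq_sqrt (hc i)]
  calc ‖x‖ = √(∑ i, ‖x i‖ ^ 2) := norm_eq_of_L2 x
    _ ≤ √((∑ i, c i) * r ^ 2) := by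
        rw [sum_mul]
        exact Real.sqrt_le_sqrt (sum_le_sum fun i _ => hsq i)
    _ = √(∑ i, c i) * r := by rw [Real.sqrt_mul (sum_nonneg fun i _ => hc i), Real.sqrt_sq hr]

theorem norm_map_add_sub_le_sum_of_single [DecidableEq ι] {F : Type*} [SeminormedAddCommGroup F]
    (g : PiLp 2 β → F) (b : ι → ℝ)
    (h : ∀ j x (v : β j), ‖g (x + single 2 j v) - g x‖ ≤ b j * ‖v‖) (x w : PiLp 2 β) :
    ‖g (x + w) - g x‖ ≤ ∑ j, b j * ‖w j‖ := by
  simpa only [univ_sum_single] using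
    norm_map_add_sum_sub_le_sum g (fun j => single 2 j (w j)) _ (fun j y => h j y (w j)) univ x

theorem sum_mul_norm_smul_le_of_mem_zero_one [∀ i, NormedSpace ℝ (β i)] {ε : ι → ℝ}
    (hε : ∀ i, ε i = 0 ∨ ε i = 1) (b : ι → ℝ) (v : ∀ i, β i) :
    ∑ j, b j * ‖ε j • v j‖ ≤ √(∑ j, ε j * b j ^ 2) * ‖WithLp.toLp 2 (fun j => ε j • v j)‖ := by
  have hmask : ∀ j, b j * ‖ε j • v j‖ = ε j * b j * ‖ε j • v j‖ := fun j => by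
    rcases hε j with h | h <;> simp [h]
  have hsq : ∀ j, (ε j * b j) ^ 2 = ε j * b j ^ 2 := fun j => by
    rcases hε j with h | h <;> simp [h]
  simp_rw [hmask, ← hsq]
  exact sum_mul_norm_apply_le (fun j => ε j * b j) (WithLp.toLp 2 (fun j => ε j • v j))

end PiLp

theorem multi_block_smoothness_general
    {L : ℕ} {H : Fin L → Type*}
    [∀ ℓ, NormedAddCommGroup (H ℓ)] [∀ ℓ, InnerProductSpace ℝ (H ℓ)]
    (G : PiLp 2 H → PiLp 2 H)
    (β : Fin L → Fin L → ℝ)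
    (hLip : ∀ (ℓ j : Fin L) (x : PiLp 2 H) (v : H j),
      ‖G (x + (WithLp.equiv 2 (∀ i, H i)).symm (Function.update 0 j v)) ℓ - G x ℓ‖
        ≤ β ℓ j * ‖v‖) :
    ∀ (ε : Fin L → ℝ), (∀ ℓ, ε ℓ = 0 ∨ ε ℓ = 1) →
      ∀ (x : PiLp 2 H) (v : ∀ ℓ, H ℓ),
        ‖G (x + (WithLp.equiv 2 (∀ i, H i)).symm (fun ℓ => ε ℓ • v ℓ)) - G x‖
          ≤ Real.sqrt (∑ ℓ, ∑ j, ε j * (β ℓ j) ^ 2) *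
            ‖(WithLp.equiv 2 (∀ i, H i)).symm (fun ℓ => ε ℓ • v ℓ)‖ := by
  intro ε hε x v
  have hε_nonneg : ∀ j, 0 ≤ ε j := fun j => by rcases hε j with h | h <;> simp [h]
  refine PiLp.norm_le_sqrt_sum_mul_of_norm_apply_le
    (fun ℓ => sum_nonneg fun j _ => mul_nonneg (hε_nonneg j) (sq_nonneg _)) (norm_nonneg _) _
    fun ℓ => ?_
  exact (PiLp.norm_map_add_sub_le_sum_of_single (fun y => G y ℓ) (β ℓ) (hLip ℓ) x _).trans
    (PiLp.sum_mul_norm_smul_le_of_mem_zero_one hε (β ℓ) v)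

/-- Multiple block smoothness from blockwise Lipschitz continuity of the gradient. -/
theorem multi_block_smoothness
    {L : ℕ} {H : Fin L → Type*}
    [∀ ℓ, NormedAddCommGroup (H ℓ)] [∀ ℓ, InnerProductSpace ℝ (H ℓ)] [∀ ℓ, CompleteSpace (H ℓ)]
    (f : PiLp 2 H → ℝ) (G : PiLp 2 H → PiLp 2 H)
    (β : Fin L → Fin L → ℝ)
    (hβ : ∀ ℓ j, 0 < β ℓ j)
    (hf : Continuous G) [CompleteSpace (PiLp 2 H)]
    (hgrad : ∀ x, HasGradientAt f (G x) x)
    (hLip : ∀ (ℓ j : Fin L) (x : PiLp 2 H) (v : H j),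
      ‖G (x + (WithLp.equiv 2 (∀ i, H i)).symm (Function.update 0 j v)) ℓ - G x ℓ‖
        ≤ β ℓ j * ‖v‖) :
    ∀ (ε : Fin L → ℝ), (∀ ℓ, ε ℓ = 0 ∨ ε ℓ = 1) →
      ∀ (x : PiLp 2 H) (v : ∀ ℓ, H ℓ),
        ‖G (x + (WithLp.equiv 2 (∀ i, H i)).symm (fun ℓ => ε ℓ • v ℓ)) - G x‖
          ≤ Real.sqrt (∑ ℓ, ∑ j, ε j * (β ℓ j) ^ 2) *
            ‖(WithLp.equiv 2 (∀ i, H i)).symm (fun ℓ => ε ℓ • v ℓ)‖ :=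
  multi_block_smoothness_general G β hLip
end

section
/- Let f: ℝⁿ → ℝ be C¹ with L-Lipschitz gradient, m: ℝⁿ → ℝ convex, and A symmetric positive definite with μ·Id ⪯ A. Fix γ ∈ (0, 1/2), a point x, and a step size α with 0 < α ≤ min{1, (1−γ)μ/L}. If x⁺ minimizes y ↦ ⟨∇f(x), y − x⟩ + (1/(2α))⟨y − x, A(y − x)⟩ + m(y), then f(x⁺) + m(x⁺) − (f(x) + m(x)) ≤ γ·(⟨∇f(x), x⁺ − x⟩ + m(x⁺) − m(x)) ≤ 0. In particular the objective f + m does not increase. -/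
/-!
Along the segment from `a` to `b`, the gradient of `f` moves by at most `L t ‖b - a‖` at time `t`,
so `t ↦ f (a + t • (b - a)) - t ⟪∇f a, b - a⟫ - L t² ‖b - a‖² / 2` is antitone on `[0, 1]`: this
is the descent lemma `f b ≤ f a + ⟪∇f a, b - a⟫ + L/2 ‖b - a‖²`. Comparing the value of the
proximal Newton model at its minimiser `x⁺` with its value at `x` gives
`D := ⟪∇f x, x⁺ - x⟫ + m x⁺ - m x ≤ -μ/(2α) ‖x⁺ - x‖²`, and the step-size bound `α L ≤ (1 - γ) μ`
turns this into `L/2 ‖x⁺ - x‖² ≤ -(1 - γ) D`. Adding the descent lemma yields the Armijo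
inequality, and `D ≤ 0` follows from the same estimate.
-/

open RealInnerProductSpace Set

section InnerProductSpace

variable {E : Type*} [NormedAddCommGroup E] [InnerProductSpace ℝ E]

theorem HasGradientAt.hasDerivAt_comp_add_smul [CompleteSpace E] {f : E → ℝ} {f' a d : E} {t : ℝ}
    (h : HasGradientAt f f' (a + t • d)) :
    HasDerivAt (fun s : ℝ => f (a + s • d)) ⟪f', d⟫ t := by
  have hline : HasDerivAt (fun s : ℝ => a + s • d) d t := by
    simpa using ((hasDerivAt_id t).smul_const d).const_add a
  simpa [InnerProductSpace.toDual, Function.comp_def] using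
    h.hasFDerivAt.comp_hasDerivAt t hline

theorem le_add_inner_add_of_lipschitz_gradient [CompleteSpace E] {f : E → ℝ} {g : E → E} {L : ℝ}
    (hgrad : ∀ z, HasGradientAt f (g z) z) (hLip : ∀ z w, ‖g z - g w‖ ≤ L * ‖z - w‖) (a b : E) :
    f b ≤ f a + ⟪g a, b - a⟫ + L / 2 * ‖b - a‖ ^ 2 := by
  set d := b - a
  let φ : ℝ → ℝ := fun t => f (a + t • d) - t * ⟪g a, d⟫ - L / 2 * t ^ 2 * ‖d‖ ^ 2
  let φ' : ℝ → ℝ := fun t => ⟪g (a + t • d), d⟫ - ⟪g a, d⟫ - L * t * ‖d‖ ^ 2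
  have hφ : ∀ t, HasDerivAt φ (φ' t) t := fun t => by
    have := (((hgrad (a + t • d)).hasDerivAt_comp_add_smul (a := a) (d := d)).sub
      ((hasDerivAt_id t).mul_const ⟪g a, d⟫)).sub
      (((hasDerivAt_pow 2 t).const_mul (L / 2)).mul_const (‖d‖ ^ 2))
    exact this.congr_deriv (by simp only [φ', Nat.cast_ofNat, Nat.add_one_sub_one]; ring)
  have hφ'_nonpos : ∀ t ∈ interior (Icc (0 : ℝ) 1), φ' t ≤ 0 := by
    intro t ht
    rw [interior_Icc] at ht
    have hmove : ‖g (a + t • d) - g a‖ ≤ L * (t * ‖d‖) := by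
      simpa [norm_smul, abs_of_pos ht.1] using hLip (a + t • d) a
    have hcs := real_inner_le_norm (g (a + t • d) - g a) d
    rw [inner_sub_left] at hcs
    nlinarith [mul_le_mul_of_nonneg_right hmove (norm_nonneg d)]
  have hanti : AntitoneOn φ (Icc 0 1) :=
    antitoneOn_of_hasDerivWithinAt_nonpos (convex_Icc 0 1)
      (fun t _ => (hφ t).continuousAt.continuousWithinAt)
      (fun t _ => (hφ t).hasDerivWithinAt) hφ'_nonpos
  have h10 : φ 1 ≤ φ 0 := hanti (left_mem_Icc.2 zero_le_one) (right_mem_Icc.2 zero_le_one)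
    zero_le_one
  simp only [φ, one_smul, zero_smul, add_zero, one_pow, zero_pow two_ne_zero, zero_mul, mul_zero,
    sub_zero, one_mul, mul_one, d, add_sub_cancel] at h10
  linarith

theorem inner_add_sub_le_of_prox_model_le {m : E → ℝ} {A : E →L[ℝ] E} {v x y : E} {α μ : ℝ}
    (hα : 0 < α) (hA : μ * ‖y - x‖ ^ 2 ≤ ⟪y - x, A (y - x)⟫)
    (hle : ⟪v, y - x⟫ + (1 / (2 * α)) * ⟪y - x, A (y - x)⟫ + m y ≤ m x) :
    ⟪v, y - x⟫ + m y - m x ≤ -(μ / (2 * α)) * ‖y - x‖ ^ 2 := by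
  have hscaled := mul_le_mul_of_nonneg_left hA (by positivity : (0 : ℝ) ≤ 1 / (2 * α))
  rw [show -(μ / (2 * α)) * ‖y - x‖ ^ 2 = -(1 / (2 * α) * (μ * ‖y - x‖ ^ 2)) by ring]
  linarith

end InnerProductSpace

theorem armijo_sufficient_decrease_prox_newton_general
    {n : ℕ} (f m : EuclideanSpace ℝ (Fin n) → ℝ)
    (g : EuclideanSpace ℝ (Fin n) → EuclideanSpace ℝ (Fin n))
    (A : EuclideanSpace ℝ (Fin n) →L[ℝ] EuclideanSpace ℝ (Fin n))
    (x xplus : EuclideanSpace ℝ (Fin n)) (L μ γ α : ℝ)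
    (hgrad : ∀ z, HasGradientAt f (g z) z)
    (hL : 0 < L)
    (hLip : ∀ z w, ‖g z - g w‖ ≤ L * ‖z - w‖)
    (hA : ∀ u, μ * ‖u‖ ^ 2 ≤ ⟪u, A u⟫)
    (hγ : γ ∈ Set.Ioo (0 : ℝ) (1 / 2))
    (hα : 0 < α) (hαle : α ≤ min 1 ((1 - γ) * μ / L))
    (hmin : ∀ y, ⟪g x, xplus - x⟫ + (1 / (2 * α)) * ⟪xplus - x, A (xplus - x)⟫ + m xplus
      ≤ ⟪g x, y - x⟫ + (1 / (2 * α)) * ⟪y - x, A (y - x)⟫ + m y) :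
    f xplus + m xplus - (f x + m x) ≤ γ * (⟪g x, xplus - x⟫ + m xplus - m x) ∧
    γ * (⟪g x, xplus - x⟫ + m xplus - m x) ≤ 0 := by
  obtain ⟨hγ0, hγ2⟩ := hγ
  set r := ‖xplus - x‖ ^ 2
  set D := ⟪g x, xplus - x⟫ + m xplus - m x
  have hdescent := le_add_inner_add_of_lipschitz_gradient hgrad hLip x xplus
  have hmodel : D ≤ -(μ / (2 * α)) * r :=
    inner_add_sub_le_of_prox_model_le hα (hA _) (by simpa using hmin x)
  have hLα : L * α ≤ (1 - γ) * μ := by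
    rw [mul_comm, ← le_div_iff₀ hL]
    exact hαle.trans (min_le_right _ _)
  have hkey : L / 2 * r ≤ -(1 - γ) * D := calc
    L / 2 * r = (L * α) / (2 * α) * r := by field_simp
    _ ≤ (1 - γ) * μ / (2 * α) * r := by gcongr
    _ = -(1 - γ) * (-(μ / (2 * α)) * r) := by ring
    _ ≤ -(1 - γ) * D := mul_le_mul_of_nonpos_left hmodel (by linarith)
  have hD : D ≤ 0 := by nlinarith [sq_nonneg ‖xplus - x‖]
  exact ⟨by linarith, mul_nonpos_of_nonneg_of_nonpos hγ0.le hD⟩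

/-- Armijo-type sufficient decrease for a damped proximal Newton step. -/
theorem armijo_sufficient_decrease_prox_newton
    {n : ℕ} (f m : EuclideanSpace ℝ (Fin n) → ℝ)
    (g : EuclideanSpace ℝ (Fin n) → EuclideanSpace ℝ (Fin n))
    (A : EuclideanSpace ℝ (Fin n) →L[ℝ] EuclideanSpace ℝ (Fin n))
    (x xplus : EuclideanSpace ℝ (Fin n)) (L μ γ α : ℝ)
    (hf : ContDiff ℝ 1 f)
    (hgrad : ∀ z, HasGradientAt f (g z) z)
    (hL : 0 < L)
    (hLip : ∀ z w, ‖g z - g w‖ ≤ L * ‖z - w‖)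
    (hm : ConvexOn ℝ Set.univ m)
    (hAsymm : ∀ u v, ⟪A u, v⟫ = ⟪u, A v⟫)
    (hμ : 0 < μ)
    (hA : ∀ u, μ * ‖u‖ ^ 2 ≤ ⟪u, A u⟫)
    (hγ : γ ∈ Set.Ioo (0 : ℝ) (1 / 2))
    (hα : 0 < α) (hαle : α ≤ min 1 ((1 - γ) * μ / L))
    (hmin : ∀ y, ⟪g x, xplus - x⟫ + (1 / (2 * α)) * ⟪xplus - x, A (xplus - x)⟫ + m xplus
      ≤ ⟪g x, y - x⟫ + (1 / (2 * α)) * ⟪y - x, A (y - x)⟫ + m y) :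
    f xplus + m xplus - (f x + m x) ≤ γ * (⟪g x, xplus - x⟫ + m xplus - m x) ∧
    γ * (⟪g x, xplus - x⟫ + m xplus - m x) ≤ 0 :=
  armijo_sufficient_decrease_prox_newton_general f m g A x xplus L μ γ α hgrad hL hLip hA hγ hα hαle
    hmin
end

section
/- Let ψ: H → [0,∞) be proper, convex, and continuous on its domain, and φ: [0,∞) → ℝ be concave, strictly increasing, and differentiable with φ'∘ψ continuous on dom ψ. Then for every y ∈ dom ψ, the limiting (Mordukhovich) subdifferential of φ∘ψ at y equals φ'(ψ(y)) · ∂ψ(y), where ∂ψ is the convex subdifferential of ψ. -/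
open Filter Topology RealInnerProductSpace

/-- Fréchet subdifferential of a real-valued function. -/
def frechetSubdiff {E : Type*} [NormedAddCommGroup E] [InnerProductSpace ℝ E]
    (f : E → ℝ) (x : E) : Set E :=
  {s | ∀ ε > (0 : ℝ), ∃ δ > (0 : ℝ), ∀ y,
    ‖y - x‖ < δ → f x + ⟪s, y - x⟫ - ε * ‖y - x‖ ≤ f y}

/-- Limiting (Mordukhovich) subdifferential of a real-valued function. -/
def limitingSubdiff {E : Type*} [NormedAddCommGroup E] [InnerProductSpace ℝ E]
    (f : E → ℝ) (x : E) : Set E :=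
  {s | ∃ (xk sk : ℕ → E),
    Tendsto xk atTop (𝓝 x) ∧
    Tendsto (fun k => f (xk k)) atTop (𝓝 (f x)) ∧
    (∀ k, sk k ∈ frechetSubdiff f (xk k)) ∧
    Tendsto sk atTop (𝓝 s)}

/-- Convex (Fenchel) subdifferential. -/
def convexSubdiff {E : Type*} [NormedAddCommGroup E] [InnerProductSpace ℝ E]
    (m : E → ℝ) (x : E) : Set E :=
  {v | ∀ y, m x + ⟪v, y - x⟫ ≤ m y}

/-! Write `c = φ'(ψ x)`, which is positive because the concave, strictly increasing `φ` has
derivative at least any of its (positive) forward slopes. A subgradient `v` of `ψ` at `x` gives the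
affine minorant `ψ x + ⟪v, · - x⟫` of `ψ`; composing it with the monotone, differentiable `φ`
shows `c • v ∈ ∂_F (φ ∘ ψ)(x)`. Conversely, the tangent line of `φ` at `ψ x` makes
`φ (ψ x) + c (ψ - ψ x)` a convex majorant of `φ ∘ ψ` touching it at `x`, so every Fréchet
subgradient `s` of `φ ∘ ψ` at `x` is one of this majorant, hence a convex one, i.e. `c⁻¹ • s ∈ ∂ψ(x)`.
Thus the Fréchet subdifferential is already `c • ∂ψ(x)` at every point, and passing to limits
changes nothing because `φ' ∘ ψ` is continuous and the graph of `∂ψ` is closed. -/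

open Set

lemma ConcaveOn.le_add_mul_sub_of_hasDerivAt {S : Set ℝ} {f : ℝ → ℝ} {f' a b : ℝ}
    (hf : ConcaveOn ℝ S f) (ha : a ∈ S) (hb : b ∈ S) (hf' : HasDerivAt f f' a) :
    f b ≤ f a + f' * (b - a) := by
  rcases lt_trichotomy a b with hab | rfl | hba
  · have := hf.slope_le_of_hasDerivAt ha hb hab hf'
    rw [slope_def_field, div_le_iff₀ (sub_pos.2 hab)] at this
    linarith
  · simp
  · have := hf.le_slope_of_hasDerivAt hb ha hba hf'
    rw [slope_def_field, le_div_iff₀ (sub_pos.2 hba)] at this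
    linarith

lemma StrictMonoOn.hasDerivAt_pos_of_concaveOn {S : Set ℝ} {f : ℝ → ℝ} {f' a b : ℝ}
    (hmono : StrictMonoOn f S) (hf : ConcaveOn ℝ S f) (ha : a ∈ S) (hb : b ∈ S) (hab : a < b)
    (hf' : HasDerivAt f f' a) : 0 < f' :=
  ((slope_pos_iff_of_le hab.le).2 (hmono ha hb hab)).trans_le
    (hf.slope_le_of_hasDerivAt ha hb hab hf')

section Subdifferential

variable {E : Type*} [NormedAddCommGroup E] [InnerProductSpace ℝ E]

lemma mem_frechetSubdiff_iff_eventually {f : E → ℝ} {x s : E} :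
    s ∈ frechetSubdiff f x ↔
      ∀ ε > (0 : ℝ), ∀ᶠ y in 𝓝 x, f x + ⟪s, y - x⟫ - ε * ‖y - x‖ ≤ f y := by
  simp only [Metric.eventually_nhds_iff, dist_eq_norm]
  rfl

lemma frechetSubdiff_subset_of_le {f g : E → ℝ} {x : E} (hle : ∀ y, g y ≤ f y)
    (heq : g x = f x) : frechetSubdiff g x ⊆ frechetSubdiff f x := by
  intro s hs ε hε
  obtain ⟨δ, hδ, hg⟩ := hs ε hε
  exact ⟨δ, hδ, fun y hy => heq ▸ (hg y hy).trans (hle y)⟩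

lemma ConvexOn.frechetSubdiff_subset_convexSubdiff {m : E → ℝ} (hm : ConvexOn ℝ univ m)
    (x : E) : frechetSubdiff m x ⊆ convexSubdiff m x := by
  intro s hs z
  set h := z - x
  suffices key : ∀ ε > (0 : ℝ), ⟪s, h⟫ - ε * ‖h‖ ≤ m z - m x by
    have hlim : Tendsto (fun ε : ℝ => ⟪s, h⟫ - ε * ‖h‖) (𝓝[>] 0) (𝓝 ⟪s, h⟫) := by
      simpa using ((show Continuous fun ε : ℝ => ⟪s, h⟫ - ε * ‖h‖ by fun_prop).tendsto
        0).mono_left nhdsWithin_le_nhds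
    linarith [le_of_tendsto hlim (eventually_nhdsWithin_of_forall key)]
  intro ε hε
  have hseg : Tendsto (fun t : ℝ => x + t • h) (𝓝[>] 0) (𝓝 x) := by
    simpa using ((show Continuous fun t : ℝ => x + t • h by fun_prop).tendsto
      0).mono_left nhdsWithin_le_nhds
  obtain ⟨t, hF, ht⟩ := ((hseg.eventually (mem_frechetSubdiff_iff_eventually.1 hs ε hε)).and
    (Ioc_mem_nhdsGT one_pos)).exists
  have hconv : m (x + t • h) ≤ m x + t * (m z - m x) := by
    have := hm.2 (mem_univ x) (mem_univ z) (sub_nonneg.2 ht.2) ht.1.le (by ring)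
    rw [show (1 - t) • x + t • z = x + t • h by simp only [h]; module, smul_eq_mul,
      smul_eq_mul] at this
    linarith
  simp only [add_sub_cancel_left, real_inner_smul_right, norm_smul,
    Real.norm_of_nonneg ht.1.le] at hF
  have : t * (⟪s, h⟫ - ε * ‖h‖) ≤ t * (m z - m x) := by linarith
  exact le_of_mul_le_mul_left this ht.1

lemma mem_convexSubdiff_of_tendsto {ψ : E → ℝ} (hψ : Continuous ψ) {x v : E}
    {xk vk : ℕ → E} (hx : Tendsto xk atTop (𝓝 x)) (hv : Tendsto vk atTop (𝓝 v))
    (hmem : ∀ k, vk k ∈ convexSubdiff ψ (xk k)) : v ∈ convexSubdiff ψ x := fun z =>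
  le_of_tendsto (((hψ.tendsto x).comp hx).add (hv.inner (tendsto_const_nhds.sub hx)))
    (Eventually.of_forall fun k => hmem k z)

lemma inv_smul_mem_convexSubdiff_of_mem_frechetSubdiff_comp {ψ : E → ℝ} {φ : ℝ → ℝ} {c : ℝ}
    {x s : E} (hψ0 : ∀ y, 0 ≤ ψ y) (hψ : ConvexOn ℝ univ ψ) (hφ : ConcaveOn ℝ (Ici 0) φ)
    (hφ' : HasDerivAt φ c (ψ x)) (hc : 0 < c) (hs : s ∈ frechetSubdiff (fun y => φ (ψ y)) x) :
    c⁻¹ • s ∈ convexSubdiff ψ x := by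
  have hm : ConvexOn ℝ univ fun y => φ (ψ x) + c * (ψ y - ψ x) :=
    ((hψ.smul hc.le).add_const (φ (ψ x) - c * ψ x)).congr fun y _ => by
      simp only [Pi.add_apply, smul_eq_mul]
      ring
  have hsm : s ∈ convexSubdiff (fun y => φ (ψ x) + c * (ψ y - ψ x)) x :=
    hm.frechetSubdiff_subset_convexSubdiff x <| frechetSubdiff_subset_of_le
      (fun y => hφ.le_add_mul_sub_of_hasDerivAt (hψ0 x) (hψ0 y) hφ') (by simp) hs
  intro z
  have hz := hsm z
  simp only [sub_self, mul_zero, add_zero] at hz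
  have : c⁻¹ * ⟪s, z - x⟫ ≤ c⁻¹ * (c * (ψ z - ψ x)) := by gcongr; linarith
  rw [inv_mul_cancel_left₀ hc.ne'] at this
  rw [real_inner_smul_left]
  linarith

lemma HasDerivAt.eventually_add_mul_sub_le {f : ℝ → ℝ} {f' u ε : ℝ} (hf : HasDerivAt f f' u)
    (hmono : MonotoneOn f (Ici 0)) (hu : 0 ≤ u) (hf'0 : 0 ≤ f') (hε : 0 < ε) :
    ∀ᶠ s in 𝓝 0, ∀ b, 0 ≤ b → u + s ≤ b → f u + f' * s - ε * |s| ≤ f b := by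
  -- `f` is only monotone on `[0, ∞)`, so compare `f b` with `f` at the truncation `max (u + s) 0`.
  have hmax : Tendsto (fun s : ℝ => max (u + s) 0) (𝓝 0) (𝓝 u) := by
    simpa [max_eq_left hu] using (show Continuous fun s : ℝ => max (u + s) 0 by fun_prop).tendsto 0
  filter_upwards [hmax.eventually ((hasDerivAt_iff_isLittleO.1 hf).def hε)] with s hs b hb hsb
  have htu : |max (u + s) 0 - u| ≤ |s| := by
    simpa [max_eq_left hu] using abs_max_sub_max_le_abs (u + s) u 0
  have hst : s ≤ max (u + s) 0 - u := by linarith [le_max_left (u + s) 0]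
  have hft : f (max (u + s) 0) ≤ f b := hmono (mem_Ici.2 (le_max_right _ _)) hb (max_le hsb hb)
  rw [Real.norm_eq_abs, Real.norm_eq_abs, smul_eq_mul] at hs
  linarith [(abs_le.1 hs).1, mul_le_mul_of_nonneg_left hst hf'0,
    mul_le_mul_of_nonneg_left htu hε.le]

lemma smul_mem_frechetSubdiff_comp {ψ : E → ℝ} {φ : ℝ → ℝ} {c : ℝ} {x v : E}
    (hψ0 : ∀ y, 0 ≤ ψ y) (hφ : MonotoneOn φ (Ici 0)) (hφ' : HasDerivAt φ c (ψ x)) (hc : 0 ≤ c)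
    (hv : v ∈ convexSubdiff ψ x) : c • v ∈ frechetSubdiff (fun y => φ (ψ y)) x := by
  rw [mem_frechetSubdiff_iff_eventually]
  intro ε hε
  have hinner : Tendsto (fun y => ⟪v, y - x⟫) (𝓝 x) (𝓝 0) := by
    simpa using (show Continuous fun y => ⟪v, y - x⟫ by fun_prop).tendsto x
  have hε' : 0 < ε / (‖v‖ + 1) := by positivity
  filter_upwards [hinner.eventually (hφ'.eventually_add_mul_sub_le hφ (hψ0 x) hc hε')] with y hy
  have hlow := hy (ψ y) (hψ0 y) (by linarith [hv y])
  have herr : ε / (‖v‖ + 1) * |⟪v, y - x⟫| ≤ ε * ‖y - x‖ :=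
    calc ε / (‖v‖ + 1) * |⟪v, y - x⟫| ≤ ε / (‖v‖ + 1) * ((‖v‖ + 1) * ‖y - x‖) := by
          gcongr
          linarith [abs_real_inner_le_norm v (y - x), norm_nonneg (y - x)]
      _ = ε * ‖y - x‖ := by field_simp
  rw [real_inner_smul_left]
  linarith

end Subdifferential

theorem limitingSubdiff_concave_comp_convex_general
    {E : Type*} [NormedAddCommGroup E] [InnerProductSpace ℝ E]
    (ψ : E → ℝ) (φ φ' : ℝ → ℝ)
    (hψ0 : ∀ x, 0 ≤ ψ x)
    (hψconv : ConvexOn ℝ Set.univ ψ)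
    (hψcont : Continuous ψ)
    (hφconc : ConcaveOn ℝ (Set.Ici 0) φ)
    (hφmono : StrictMonoOn φ (Set.Ici 0))
    (hφdiff : ∀ u ∈ Set.Ici (0 : ℝ), HasDerivAt φ (φ' u) u)
    (hφ'cont : Continuous fun x => φ' (ψ x)) :
    ∀ y : E, limitingSubdiff (fun x => φ (ψ x)) y = (fun v => φ' (ψ y) • v) '' convexSubdiff ψ y := by
  have hderiv : ∀ x, HasDerivAt φ (φ' (ψ x)) (ψ x) := fun x => hφdiff _ (hψ0 x)
  have hpos : ∀ x, 0 < φ' (ψ x) := fun x =>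
    hφmono.hasDerivAt_pos_of_concaveOn hφconc (hψ0 x) (by simp [add_nonneg (hψ0 x)])
      (lt_add_one _) (hderiv x)
  intro y
  ext s
  constructor
  · rintro ⟨xk, sk, hxk, -, hsk, hlim⟩
    have hvk := (((hφ'cont.tendsto y).comp hxk).inv₀ (hpos y).ne').smul hlim
    refine ⟨(φ' (ψ y))⁻¹ • s, mem_convexSubdiff_of_tendsto hψcont hxk hvk fun k => ?_,
      smul_inv_smul₀ (hpos y).ne' s⟩
    exact inv_smul_mem_convexSubdiff_of_mem_frechetSubdiff_comp hψ0 hψconv hφconc (hderiv _)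
      (hpos _) (hsk k)
  · rintro ⟨v, hv, rfl⟩
    exact ⟨fun _ => y, fun _ => φ' (ψ y) • v, tendsto_const_nhds, tendsto_const_nhds,
      fun _ => smul_mem_frechetSubdiff_comp hψ0 hφmono.monotoneOn (hderiv y) (hpos y).le hv,
      tendsto_const_nhds⟩

/-- Chain rule for the limiting subdifferential of a concave ∘ convex
composition (Repetti–Wiaux 2021, Prop. 2.10). -/
theorem limitingSubdiff_concave_comp_convex
    {E : Type*} [NormedAddCommGroup E] [InnerProductSpace ℝ E] [FiniteDimensional ℝ E]
    (ψ : E → ℝ) (φ φ' : ℝ → ℝ)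
    (hψ0 : ∀ x, 0 ≤ ψ x)
    (hψconv : ConvexOn ℝ Set.univ ψ)
    (hψcont : Continuous ψ)
    (hφconc : ConcaveOn ℝ (Set.Ici 0) φ)
    (hφmono : StrictMonoOn φ (Set.Ici 0))
    (hφdiff : ∀ u ∈ Set.Ici (0 : ℝ), HasDerivAt φ (φ' u) u)
    (hφ'cont : Continuous fun x => φ' (ψ x)) :
    ∀ y : E, limitingSubdiff (fun x => φ (ψ x)) y = (fun v => φ' (ψ y) • v) '' convexSubdiff ψ y :=
  limitingSubdiff_concave_comp_convex_general ψ φ φ' hψ0 hψconv hψcont hφconc hφmono hφdiff hφ'cont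
end

section
/- Let (C_k), (D_k), (Δ_k) be nonnegative real sequences, and a, b > 0 constants with: C_k ≤ a·D_{k−1}·Δ_k for all k > k₀, and D_k ≤ sqrt(b·C_k). Then 2·D_k ≤ a·b·Δ_k + D_{k−1} for all k > k₀; consequently, for all K > k₀, Σ_{k=k₀+1}^{K} D_k ≤ D_{k₀} + a·b·Σ_{k=k₀+1}^{K} Δ_k. In particular if Σ Δ_k < ∞ then Σ D_k < ∞. -/
/-!
By AM–GM, `D_k ≤ √(b C_k) ≤ √((a b Δ_k) D_{k-1}) ≤ (a b Δ_k + D_{k-1}) / 2`. Summing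
`2 D_k ≤ a b Δ_k + D_{k-1}` over `k₀ < k ≤ K`, each `D_{k-1}` on the right is absorbed by one
of the two copies of `D_{k-1}` on the left, so the partial sums of `D` are bounded by
`D_{k₀} + a b ∑ Δ_k`.
-/

open Finset

theorem Real.two_mul_sqrt_mul_le_add {u v : ℝ} (hu : 0 ≤ u) (hv : 0 ≤ v) :
    2 * √(u * v) ≤ u + v := by
  rw [Real.sqrt_mul hu, ← mul_assoc]
  calc 2 * √u * √v ≤ √u ^ 2 + √v ^ 2 := two_mul_le_add_sq _ _
    _ = u + v := by rw [Real.sq_sqrt hu, Real.sq_sqrt hv]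

theorem two_mul_le_add_of_le_sqrt_of_le_mul {a b c d d' δ : ℝ} (ha : 0 ≤ a) (hb : 0 ≤ b)
    (hd' : 0 ≤ d') (hδ : 0 ≤ δ) (hc : c ≤ a * d' * δ) (hd : d ≤ √(b * c)) :
    2 * d ≤ a * b * δ + d' := by
  have hbc : b * c ≤ (a * b * δ) * d' :=
    calc b * c ≤ b * (a * d' * δ) := mul_le_mul_of_nonneg_left hc hb
      _ = (a * b * δ) * d' := by ring
  calc 2 * d ≤ 2 * √((a * b * δ) * d') := by gcongr; exact hd.trans (Real.sqrt_le_sqrt hbc)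
    _ ≤ a * b * δ + d' := Real.two_mul_sqrt_mul_le_add (by positivity) hd'

theorem sum_Ioc_add_le_of_two_mul_le {d e : ℕ → ℝ} {k₀ : ℕ}
    (h : ∀ k, k₀ < k → 2 * d k ≤ e k + d (k - 1)) {K : ℕ} (hK : k₀ ≤ K) :
    ∑ k ∈ Ioc k₀ K, d k + d K ≤ d k₀ + ∑ k ∈ Ioc k₀ K, e k := by
  induction K, hK using Nat.le_induction with
  | base => simp
  | succ n hn ih =>
    have hstep := h (n + 1) (by omega)
    rw [Nat.add_sub_cancel] at hstep
    rw [sum_Ioc_succ_top hn, sum_Ioc_succ_top hn]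
    linarith

theorem summable_of_sum_Ioc_le {d : ℕ → ℝ} (hd : ∀ k, 0 ≤ d k) {k₀ : ℕ} {c : ℝ}
    (h : ∀ K, k₀ < K → ∑ k ∈ Ioc k₀ K, d k ≤ c) : Summable d := by
  rw [← summable_nat_add_iff (k₀ + 1)]
  refine summable_of_sum_range_le (c := c) (fun n => hd _) fun n => ?_
  calc ∑ i ∈ range n, d (i + (k₀ + 1)) = ∑ k ∈ Ioc k₀ (n + k₀), d k := by
        rw [range_eq_Ico, sum_Ico_add', zero_add, ← Ico_add_one_add_one_eq_Ioc, add_assoc]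
    _ ≤ ∑ k ∈ Ioc k₀ (n + 1 + k₀), d k :=
      sum_le_sum_of_subset_of_nonneg (Ioc_subset_Ioc_right (by omega)) fun k _ _ => hd k
    _ ≤ c := h _ (by omega)

theorem KL_summability_argument_general
    (C D Δ : ℕ → ℝ) (a b : ℝ) (k₀ : ℕ)
    (ha : 0 < a) (hb : 0 < b)
    (hD0 : ∀ k, 0 ≤ D k) (hΔ0 : ∀ k, 0 ≤ Δ k)
    (hC : ∀ k, k₀ < k → C k ≤ a * D (k - 1) * Δ k)
    (hD : ∀ k, k₀ < k → D k ≤ Real.sqrt (b * C k)) :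
    (∀ k, k₀ < k → 2 * D k ≤ a * b * Δ k + D (k - 1)) ∧
    (∀ K, k₀ < K →
      ∑ k ∈ Finset.Ioc k₀ K, D k ≤ D k₀ + a * b * ∑ k ∈ Finset.Ioc k₀ K, Δ k) ∧
    (Summable Δ → Summable D) := by
  have step : ∀ k, k₀ < k → 2 * D k ≤ a * b * Δ k + D (k - 1) := fun k hk =>
    two_mul_le_add_of_le_sqrt_of_le_mul ha.le hb.le (hD0 _) (hΔ0 k) (hC k hk) (hD k hk)
  have partial_sum_le : ∀ K, k₀ < K →
      ∑ k ∈ Ioc k₀ K, D k ≤ D k₀ + a * b * ∑ k ∈ Ioc k₀ K, Δ k := by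
    intro K hK
    have htele := sum_Ioc_add_le_of_two_mul_le step hK.le
    rw [← mul_sum] at htele
    linarith [hD0 K]
  refine ⟨step, partial_sum_le, fun hΔ => summable_of_sum_Ioc_le hD0
    (c := D k₀ + a * b * ∑' k, Δ k) fun K hK => (partial_sum_le K hK).trans ?_⟩
  gcongr
  exact hΔ.sum_le_tsum _ fun k _ => hΔ0 k

/-- The KŁ summability argument: from `C_k ≤ a D_{k−1} Δ_k` and `D_k ≤ √(b C_k)`
one gets `2 D_k ≤ a b Δ_k + D_{k−1}`, hence summability of `(D_k)`. -/
theorem KL_summability_argument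
    (C D Δ : ℕ → ℝ) (a b : ℝ) (k₀ : ℕ)
    (ha : 0 < a) (hb : 0 < b)
    (hC0 : ∀ k, 0 ≤ C k) (hD0 : ∀ k, 0 ≤ D k) (hΔ0 : ∀ k, 0 ≤ Δ k)
    (hC : ∀ k, k₀ < k → C k ≤ a * D (k - 1) * Δ k)
    (hD : ∀ k, k₀ < k → D k ≤ Real.sqrt (b * C k)) :
    (∀ k, k₀ < k → 2 * D k ≤ a * b * Δ k + D (k - 1)) ∧
    (∀ K, k₀ < K →
      ∑ k ∈ Finset.Ioc k₀ K, D k ≤ D k₀ + a * b * ∑ k ∈ Finset.Ioc k₀ K, Δ k) ∧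
    (Summable Δ → Summable D) :=
  KL_summability_argument_general C D Δ a b k₀ ha hb hD0 hΔ0 hC hD
end
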